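/- arXiv:1603.03179 — 2 statements merged into one kernel-verified Lean document; each statement's English description precedes it below -/
import Mathlib

section
/- Let μ, ν be probability measures on ℝ^d with μ ≪ ν, and let μ^(N) be an exchangeable probability measure on (ℝ^d)^N whose first marginal is μ^(1,N). Then H(μ^(1,N) | ν) ≤ (2/N) H(μ^(N) | ν^{⊗N}), where H denotes relative entropy (Csiszár's inequality). -/
/-!
Relative entropy with respect to a product measure is superadditive over the coordinates:
disintegrating `μ` on `X × Y` along its first marginal, the chain rule for the
Kullback–Leibler divergence gives
`H(μ | ν₁ ⊗ ν₂) = H(μ.fst | ν₁) + H(μ | μ.fst ⊗ ν₂)`, and the data processing inequality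
for `Prod.snd` bounds the last term below by `H(μ.snd | ν₂)`. Iterating over the `N`
coordinates, `H(μ^(N) | ν^{⊗N})` dominates the sum of the divergences of the one-dimensional
marginals, which by exchangeability all equal `H(μ^(1,N) | ν)`.
-/

open MeasureTheory
open scoped BigOperators ENNReal Classical

/-- Relative entropy `H(μ | ν) = ∫ log (dμ/dν) dμ` if `μ ≪ ν` (and the integral makes
sense), `+∞` otherwise. -/

noncomputable def relEnt {α : Type*} [MeasurableSpace α] (μ ν : Measure α) : ℝ≥0∞ :=
  if μ ≪ ν ∧ Integrable (llr μ ν) μ then ENNReal.ofReal (∫ x, llr μ ν x ∂μ) else ∞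

open InformationTheory ProbabilityTheory

lemma relEnt_eq_klDiv_of_measure_eq {α : Type*} [MeasurableSpace α] {μ ν : Measure α}
    (h : μ Set.univ = ν Set.univ) : relEnt μ ν = klDiv μ ν := by
  unfold relEnt
  split_ifs with hμν
  · simp [klDiv_of_ac_of_integrable hμν.1 hμν.2, measureReal_def, h]
  · exact (klDiv_eq_top_iff.mpr fun hac hint => hμν ⟨hac, hint⟩).symm

lemma klDiv_map_measurableEquiv {α β : Type*} [MeasurableSpace α] [MeasurableSpace β]
    (μ ν : Measure α) [IsFiniteMeasure μ] [IsFiniteMeasure ν] (e : α ≃ᵐ β) :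
    klDiv (μ.map e) (ν.map e) = klDiv μ ν := by
  refine le_antisymm (klDiv_map_le μ ν e.measurable) ?_
  simpa only [e.map_symm_map] using klDiv_map_le (μ.map e) (ν.map e) e.symm.measurable

theorem klDiv_fst_add_klDiv_snd_le {α Ω : Type*} [MeasurableSpace α] [MeasurableSpace Ω]
    [StandardBorelSpace Ω] [Nonempty Ω] (μ : Measure (α × Ω)) [IsProbabilityMeasure μ]
    (ν₁ : Measure α) (ν₂ : Measure Ω) [IsFiniteMeasure ν₁] [IsProbabilityMeasure ν₂] :
    klDiv μ.fst ν₁ + klDiv μ.snd ν₂ ≤ klDiv μ (ν₁.prod ν₂) := by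
  have chain_rule : klDiv μ (ν₁.prod ν₂) = klDiv μ.fst ν₁ + klDiv μ (μ.fst.prod ν₂) := by
    simpa only [Measure.compProd_const, μ.disintegrate μ.condKernel] using
      klDiv_compProd_eq_add μ.fst ν₁ μ.condKernel (Kernel.const α ν₂)
  have data_processing : klDiv μ.snd ν₂ ≤ klDiv μ (μ.fst.prod ν₂) := by
    have h := klDiv_map_le μ (μ.fst.prod ν₂) measurable_snd
    rwa [← Measure.snd, ← Measure.snd, Measure.snd_prod] at h
  rw [chain_rule]
  gcongr

lemma fst_map_piFinSuccAbove_zero {X : Type*} [MeasurableSpace X] {n : ℕ}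
    (μ : Measure (Fin (n + 1) → X)) :
    (μ.map (MeasurableEquiv.piFinSuccAbove (fun _ => X) 0)).fst = μ.map (fun x => x 0) := by
  rw [Measure.fst, Measure.map_map measurable_fst (MeasurableEquiv.measurable _)]
  rfl

lemma map_eval_snd_map_piFinSuccAbove_zero {X : Type*} [MeasurableSpace X] {n : ℕ}
    (μ : Measure (Fin (n + 1) → X)) (j : Fin n) :
    (μ.map (MeasurableEquiv.piFinSuccAbove (fun _ => X) 0)).snd.map (fun y => y j) =
      μ.map (fun x => x j.succ) := by
  rw [Measure.snd, Measure.map_map measurable_snd (MeasurableEquiv.measurable _),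
    Measure.map_map (measurable_pi_apply j) (measurable_snd.comp (MeasurableEquiv.measurable _))]
  rfl

theorem sum_klDiv_map_eval_le_klDiv_pi {X : Type*} [MeasurableSpace X] [StandardBorelSpace X]
    [Nonempty X] {n : ℕ} (μ : Measure (Fin n → X)) [IsProbabilityMeasure μ]
    (ν : Fin n → Measure X) [∀ i, IsProbabilityMeasure (ν i)] :
    ∑ i, klDiv (μ.map (fun x => x i)) (ν i) ≤ klDiv μ (Measure.pi ν) := by
  induction n with
  | zero => simp
  | succ n ih =>
    let e := MeasurableEquiv.piFinSuccAbove (fun _ : Fin (n + 1) => X) 0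
    have : IsProbabilityMeasure (μ.map e) :=
      Measure.isProbabilityMeasure_map e.measurable.aemeasurable
    have hν : (Measure.pi ν).map e = (ν 0).prod (Measure.pi fun j => ν j.succ) :=
      (measurePreserving_piFinSuccAbove ν 0).map_eq
    calc ∑ i, klDiv (μ.map (fun x => x i)) (ν i)
        = klDiv (μ.map e).fst (ν 0) +
            ∑ j, klDiv ((μ.map e).snd.map (fun y => y j)) (ν j.succ) := by
          simp only [Fin.sum_univ_succ, e, fst_map_piFinSuccAbove_zero,
            map_eval_snd_map_piFinSuccAbove_zero]
      _ ≤ klDiv (μ.map e).fst (ν 0) + klDiv (μ.map e).snd (Measure.pi fun j => ν j.succ) := by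
          gcongr
          exact ih _ _
      _ ≤ klDiv (μ.map e) ((ν 0).prod (Measure.pi fun j => ν j.succ)) :=
          klDiv_fst_add_klDiv_snd_le _ _ _
      _ = klDiv μ (Measure.pi ν) := by rw [← hν, klDiv_map_measurableEquiv]

lemma map_eval_eq_of_perm_invariant {ι X : Type*} [MeasurableSpace X] (μ : Measure (ι → X))
    (hμ : ∀ σ : Equiv.Perm ι, μ.map (fun x => x ∘ σ) = μ) (i j : ι) :
    μ.map (fun x => x i) = μ.map (fun x => x j) := by
  conv_lhs => rw [← hμ (Equiv.swap i j)]
  rw [Measure.map_map (measurable_pi_apply i) (by fun_prop)]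
  simp [Function.comp_def]

theorem natCast_mul_klDiv_map_eval_le_of_perm_invariant {X : Type*} [MeasurableSpace X]
    [StandardBorelSpace X] [Nonempty X] {n : ℕ} (μ : Measure (Fin n → X))
    [IsProbabilityMeasure μ] (hμ : ∀ σ : Equiv.Perm (Fin n), μ.map (fun x => x ∘ σ) = μ)
    (ν : Measure X) [IsProbabilityMeasure ν] (i : Fin n) :
    n * klDiv (μ.map (fun x => x i)) ν ≤ klDiv μ (Measure.pi fun _ => ν) := by
  simpa [map_eval_eq_of_perm_invariant μ hμ _ i] using
    sum_klDiv_map_eval_le_klDiv_pi μ fun _ => ν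

theorem csiszar_inequality_general {d N : ℕ} [NeZero N]
    (μN : Measure (Fin N → EuclideanSpace ℝ (Fin d))) [IsProbabilityMeasure μN]
    (hex : ∀ σ : Equiv.Perm (Fin N), μN.map (fun x => x ∘ σ) = μN)
    (ν : Measure (EuclideanSpace ℝ (Fin d))) [IsProbabilityMeasure ν]
    (μ1 : Measure (EuclideanSpace ℝ (Fin d))) (hμ1 : μ1 = μN.map (fun x => x 0)) :
    relEnt μ1 ν ≤ (2 / (N : ℝ≥0∞)) * relEnt μN (Measure.pi fun _ : Fin N => ν) := by
  subst hμ1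
  have : IsProbabilityMeasure (μN.map fun x => x 0) :=
    Measure.isProbabilityMeasure_map (measurable_pi_apply 0).aemeasurable
  rw [relEnt_eq_klDiv_of_measure_eq (by simp), relEnt_eq_klDiv_of_measure_eq (by simp)]
  set K := klDiv μN (Measure.pi fun _ => ν)
  calc klDiv (μN.map fun x => x 0) ν ≤ K / N := by
        rw [ENNReal.le_div_iff_mul_le (by simp [NeZero.ne N]) (by simp), mul_comm]
        exact natCast_mul_klDiv_map_eval_le_of_perm_invariant μN hex ν 0
    _ ≤ 2 / N * K := by
        rw [ENNReal.div_eq_inv_mul, ENNReal.div_eq_inv_mul, mul_assoc]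
        gcongr
        exact le_mul_of_one_le_left zero_le one_le_two

/-- Csiszár's inequality: the relative entropy of the first marginal of an exchangeable
law with respect to `ν` is at most `2/N` times the relative entropy of the joint law with
respect to `ν^{⊗N}`. -/
theorem csiszar_inequality {d N : ℕ} [NeZero N]
    (μN : Measure (Fin N → EuclideanSpace ℝ (Fin d))) [IsProbabilityMeasure μN]
    (hex : ∀ σ : Equiv.Perm (Fin N), μN.map (fun x => x ∘ σ) = μN)
    (ν : Measure (EuclideanSpace ℝ (Fin d))) [IsProbabilityMeasure ν]
    (μ1 : Measure (EuclideanSpace ℝ (Fin d))) (hμ1 : μ1 = μN.map (fun x => x 0))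
    (hac : μ1 ≪ ν) :
    relEnt μ1 ν ≤ (2 / (N : ℝ≥0∞)) * relEnt μN (Measure.pi fun _ : Fin N => ν) :=
  csiszar_inequality_general μN hex ν μ1 hμ1
end

section
/- Suppose for all N ≥ 1 and t ≥ 0 one has W₂²(m_t^{⊗N}, m_t^{(N)}) ≤ K e^{2bt} (parallel coupling estimate), W₂²(m_t^{(N)}, m_∞^{(N)}) ≤ K N e^{−χt} (entropy decay plus Talagrand), and W₂²(m_∞^{(N)}, m_∞^{⊗N}) ≤ K (equilibrium chaos estimate), where K, b, χ > 0 are constants independent of N and t, and m_t, m_∞ are probability measures on ℝ^{2d} with W₂²(m_t^{⊗N}, m_∞^{⊗N}) = N W₂²(m_t, m_∞). Then for all t ≥ 0, W₂²(m_t, m_∞) ≤ K' e^{−χt} for some constant K' depending only on K, b, χ (obtained by the triangle inequality for W₂ and letting N → ∞). -/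
/-!
Along the chain m_t^{⊗N} → m_t^{(N)} → m_∞^{(N)} → m_∞^{⊗N}, gluing couplings at the middle
measures gives the quasi-triangle inequality W(μ, ρ) ≤ 2 W(μ, ν) + 2 W(ν, ρ) for the squared cost,
hence N W₂²(m_t, m_∞) ≤ 2K e^{2bt} + 4KN e^{-χt} + 4K for every N ≥ 1. Dividing by N and letting
N → ∞ kills the time-growing term and leaves W₂²(m_t, m_∞) ≤ 4K e^{-χt}.
-/

open MeasureTheory ENNReal
open scoped BigOperators

/-- The set of couplings of two measures. -/
def couplings {X Y : Type*} [MeasurableSpace X] [MeasurableSpace Y]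
    (μ : Measure X) (ν : Measure Y) : Set (Measure (X × Y)) :=
  {π | π.map Prod.fst = μ ∧ π.map Prod.snd = ν}

/-- Squared quadratic Wasserstein distance on an (extended) metric space. -/
noncomputable def W2sq {X : Type*} [MeasurableSpace X] [PseudoEMetricSpace X]
    (μ ν : Measure X) : ℝ≥0∞ :=
  ⨅ (π : Measure (X × X)) (_ : π ∈ couplings μ ν), ∫⁻ p, edist p.1 p.2 ^ 2 ∂π

/-- Squared quadratic Wasserstein distance on `(ℝ^{2d})^N` for the Euclidean
(coordinate-sum) cost. -/
noncomputable def W2sqPi {d N : ℕ}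
    (μ ν : Measure (Fin N → EuclideanSpace ℝ (Fin d))) : ℝ≥0∞ :=
  ⨅ (π : Measure ((Fin N → EuclideanSpace ℝ (Fin d)) × (Fin N → EuclideanSpace ℝ (Fin d))))
    (_ : π ∈ couplings μ ν), ∫⁻ p, ∑ i, edist (p.1 i) (p.2 i) ^ 2 ∂π

open ProbabilityTheory

theorem ENNReal.add_sq_le_two_mul (a b : ℝ≥0∞) : (a + b) ^ 2 ≤ 2 * (a ^ 2 + b ^ 2) := by
  have h := ENNReal.rpow_add_le_mul_rpow_add_rpow a b one_le_two
  norm_num at h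
  exact_mod_cast h

theorem edist_sq_le_two_mul_add {E : Type*} [PseudoEMetricSpace E] (x y z : E) :
    edist x z ^ 2 ≤ 2 * edist x y ^ 2 + 2 * edist y z ^ 2 := by
  calc edist x z ^ 2 ≤ (edist x y + edist y z) ^ 2 := by gcongr; exact edist_triangle x y z
    _ ≤ _ := by rw [← mul_add]; exact ENNReal.add_sq_le_two_mul _ _

theorem MeasureTheory.Measure.exists_glue {X Y Z : Type*} [MeasurableSpace X] [MeasurableSpace Y]
    [MeasurableSpace Z] [StandardBorelSpace X] [Nonempty X] [StandardBorelSpace Z] [Nonempty Z]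
    {π₁ : Measure (X × Y)} {π₂ : Measure (Y × Z)} [IsFiniteMeasure π₁] [IsFiniteMeasure π₂]
    (h : π₁.map Prod.snd = π₂.map Prod.fst) :
    ∃ γ : Measure (Y × X × Z),
      γ.map (fun p => (p.2.1, p.1)) = π₁ ∧ γ.map (fun p => (p.1, p.2.2)) = π₂ := by
  -- Disintegrate both couplings over the common marginal and make them conditionally independent.
  set π₁' := π₁.map Prod.swap
  have hfst : π₁'.fst = π₂.fst := by
    rw [Measure.fst, Measure.map_map measurable_fst measurable_swap]
    exact h
  refine ⟨π₂.fst ⊗ₘ (π₁'.condKernel ×ₖ π₂.condKernel), ?_, ?_⟩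
  · calc _ = ((π₂.fst ⊗ₘ (π₁'.condKernel ×ₖ π₂.condKernel)).map (Prod.map id Prod.fst)).map
            Prod.swap := by
          rw [Measure.map_map measurable_swap (by fun_prop)]; rfl
      _ = π₁'.map Prod.swap := by
          rw [← Measure.compProd_map measurable_fst, ← Kernel.fst_eq, Kernel.fst_prod, ← hfst,
            Measure.disintegrate]
      _ = π₁ := by
          rw [Measure.map_map measurable_swap measurable_swap, Prod.swap_swap_eq, Measure.map_id]
  · rw [show (fun p : Y × X × Z => (p.1, p.2.2)) = Prod.map id Prod.snd from rfl,
      ← Measure.compProd_map measurable_snd, ← Kernel.snd_eq, Kernel.snd_prod,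
      Measure.disintegrate]

noncomputable def transportCost {X : Type*} [MeasurableSpace X] (c : X → X → ℝ≥0∞)
    (μ ν : Measure X) : ℝ≥0∞ :=
  ⨅ π ∈ couplings μ ν, ∫⁻ p, c p.1 p.2 ∂π

theorem transportCost_le_two_mul_add {X : Type*} [MeasurableSpace X] [StandardBorelSpace X]
    [Nonempty X] {c : X → X → ℝ≥0∞} (hc : Measurable fun p : X × X => c p.1 p.2)
    (htri : ∀ x y z, c x z ≤ 2 * c x y + 2 * c y z) (μ ν ρ : Measure X) [IsFiniteMeasure ν] :
    transportCost c μ ρ ≤ 2 * transportCost c μ ν + 2 * transportCost c ν ρ := by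
  simp only [transportCost, ENNReal.mul_iInf_of_ne two_ne_zero ofNat_ne_top, ENNReal.iInf_add,
    ENNReal.add_iInf]
  refine le_iInf₂ fun π₂ h₂ => le_iInf₂ fun π₁ h₁ => ?_
  have : IsFiniteMeasure π₁ :=
    (Measure.isFiniteMeasure_map_iff measurable_snd.aemeasurable).1 (h₁.2 ▸ inferInstance)
  have : IsFiniteMeasure π₂ :=
    (Measure.isFiniteMeasure_map_iff measurable_fst.aemeasurable).1 (h₂.1 ▸ inferInstance)
  obtain ⟨γ, hγ₁, hγ₂⟩ := Measure.exists_glue (h₁.2.trans h₂.1.symm)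
  have hπ : γ.map (fun p => (p.2.1, p.2.2)) ∈ couplings μ ρ := by
    constructor
    · rw [← h₁.1, ← hγ₁, Measure.map_map measurable_fst (by fun_prop),
        Measure.map_map measurable_fst (by fun_prop)]
      rfl
    · rw [← h₂.2, ← hγ₂, Measure.map_map measurable_snd (by fun_prop),
        Measure.map_map measurable_snd (by fun_prop)]
      rfl
  have hm₁ : Measurable fun p : X × X × X => (p.2.1, p.1) := by fun_prop
  have hm₂ : Measurable fun p : X × X × X => (p.1, p.2.2) := by fun_prop
  have hm₃ : Measurable fun p : X × X × X => (p.2.1, p.2.2) := by fun_prop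
  have hc₁ : Measurable fun p : X × X × X => c p.2.1 p.1 := hc.comp hm₁
  have hc₂ : Measurable fun p : X × X × X => c p.1 p.2.2 := hc.comp hm₂
  calc ⨅ π ∈ couplings μ ρ, ∫⁻ p, c p.1 p.2 ∂π
      ≤ ∫⁻ p, c p.1 p.2 ∂(γ.map fun p => (p.2.1, p.2.2)) := iInf₂_le _ hπ
    _ = ∫⁻ p, c p.2.1 p.2.2 ∂γ := lintegral_map hc hm₃
    _ ≤ ∫⁻ p, (2 * c p.2.1 p.1 + 2 * c p.1 p.2.2) ∂γ := lintegral_mono fun p => htri _ _ _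
    _ = 2 * ∫⁻ p, c p.2.1 p.1 ∂γ + 2 * ∫⁻ p, c p.1 p.2.2 ∂γ := by
      rw [lintegral_add_left (hc₁.const_mul 2), lintegral_const_mul _ hc₁,
        lintegral_const_mul _ hc₂]
    _ = 2 * ∫⁻ p, c p.1 p.2 ∂π₁ + 2 * ∫⁻ p, c p.1 p.2 ∂π₂ := by
      rw [← hγ₁, ← hγ₂, lintegral_map hc hm₁, lintegral_map hc hm₂]

theorem W2sqPi_eq_transportCost {d N : ℕ} (μ ν : Measure (Fin N → EuclideanSpace ℝ (Fin d))) :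
    W2sqPi μ ν = transportCost (fun x y => ∑ i, edist (x i) (y i) ^ 2) μ ν := rfl

theorem W2sqPi_le_two_mul_add {d N : ℕ} (μ ν ρ : Measure (Fin N → EuclideanSpace ℝ (Fin d)))
    [IsFiniteMeasure ν] : W2sqPi μ ρ ≤ 2 * W2sqPi μ ν + 2 * W2sqPi ν ρ := by
  simp only [W2sqPi_eq_transportCost]
  refine transportCost_le_two_mul_add ?_ (fun x y z => ?_) μ ν ρ
  · exact Finset.measurable_sum _ fun i _ => by fun_prop
  simp only [Finset.mul_sum, ← Finset.sum_add_distrib]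
  exact Finset.sum_le_sum fun i _ => edist_sq_le_two_mul_add _ _ _

theorem ENNReal.le_of_forall_natCast_mul_le_add {w a b : ℝ≥0∞} (ha : a ≠ ⊤)
    (h : ∀ N : ℕ, 1 ≤ N → N * w ≤ a + N * b) : w ≤ b := by
  have hlim : Filter.Tendsto (fun N : ℕ => a * (N : ℝ≥0∞)⁻¹ + b) Filter.atTop (nhds b) := by
    simpa using
      (ENNReal.Tendsto.const_mul ENNReal.tendsto_inv_nat_nhds_zero (Or.inr ha)).add_const b
  refine ge_of_tendsto hlim (Filter.eventually_atTop.2 ⟨1, fun N hN => ?_⟩)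
  have hN0 : (N : ℝ≥0∞) ≠ 0 := by exact_mod_cast (Nat.one_le_iff_ne_zero.mp hN)
  calc w = (N : ℝ≥0∞)⁻¹ * (N * w) := by
        rw [← mul_assoc, ENNReal.inv_mul_cancel hN0 (ENNReal.natCast_ne_top N), one_mul]
    _ ≤ (N : ℝ≥0∞)⁻¹ * (a + N * b) := by gcongr; exact h N hN
    _ = a * (N : ℝ≥0∞)⁻¹ + b := by
        rw [mul_add, ← mul_assoc, ENNReal.inv_mul_cancel hN0 (ENNReal.natCast_ne_top N), one_mul,
          mul_comm]

theorem nonlinear_W2_convergence_general {d : ℕ}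
    (mt : ℝ → Measure (EuclideanSpace ℝ (Fin (2 * d))))
    (minf : Measure (EuclideanSpace ℝ (Fin (2 * d))))
    (mN : (N : ℕ) → ℝ → Measure (Fin N → EuclideanSpace ℝ (Fin (2 * d))))
    (mNinf : (N : ℕ) → Measure (Fin N → EuclideanSpace ℝ (Fin (2 * d))))
    (hmN : ∀ N t, IsProbabilityMeasure (mN N t)) (hmNinf : ∀ N, IsProbabilityMeasure (mNinf N))
    (K b χ : ℝ) (hK : 0 < K)
    (h1 : ∀ N : ℕ, 1 ≤ N → ∀ t : ℝ, 0 ≤ t →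
      W2sqPi (Measure.pi fun _ : Fin N => mt t) (mN N t) ≤ ENNReal.ofReal (K * Real.exp (2 * b * t)))
    (h2 : ∀ N : ℕ, 1 ≤ N → ∀ t : ℝ, 0 ≤ t →
      W2sqPi (mN N t) (mNinf N) ≤ ENNReal.ofReal (K * N * Real.exp (-χ * t)))
    (h3 : ∀ N : ℕ, 1 ≤ N → W2sqPi (mNinf N) (Measure.pi fun _ : Fin N => minf) ≤ ENNReal.ofReal K)
    (htens : ∀ N : ℕ, 1 ≤ N → ∀ t : ℝ, 0 ≤ t →
      W2sqPi (Measure.pi fun _ : Fin N => mt t) (Measure.pi fun _ : Fin N => minf)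
        = (N : ℝ≥0∞) * W2sq (mt t) minf) :
    ∃ K' : ℝ, 0 < K' ∧ ∀ t : ℝ, 0 ≤ t →
      W2sq (mt t) minf ≤ ENNReal.ofReal (K' * Real.exp (-χ * t)) := by
  refine ⟨4 * K, by positivity, fun t ht => ?_⟩
  refine ENNReal.le_of_forall_natCast_mul_le_add
    (a := 2 * ENNReal.ofReal (K * Real.exp (2 * b * t)) + 4 * ENNReal.ofReal K) (by finiteness)
    fun N hN => ?_
  have := hmN N t
  have := hmNinf N
  calc (N : ℝ≥0∞) * W2sq (mt t) minf
      = W2sqPi (Measure.pi fun _ : Fin N => mt t) (Measure.pi fun _ : Fin N => minf) :=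
        (htens N hN t ht).symm
    _ ≤ 2 * W2sqPi (Measure.pi fun _ : Fin N => mt t) (mN N t)
        + 2 * (2 * W2sqPi (mN N t) (mNinf N)
          + 2 * W2sqPi (mNinf N) (Measure.pi fun _ : Fin N => minf)) := by
      grw [W2sqPi_le_two_mul_add _ (mN N t), W2sqPi_le_two_mul_add (mN N t) (mNinf N)]
    _ ≤ 2 * ENNReal.ofReal (K * Real.exp (2 * b * t))
        + 2 * (2 * ENNReal.ofReal (K * N * Real.exp (-χ * t)) + 2 * ENNReal.ofReal K) := by
      gcongr
      exacts [h1 N hN t ht, h2 N hN t ht, h3 N hN]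
    _ = _ := by
      rw [mul_right_comm K, ENNReal.ofReal_mul (p := K * Real.exp (-χ * t)) (by positivity),
        ENNReal.ofReal_natCast, mul_assoc 4, ENNReal.ofReal_mul (p := 4) (by norm_num),
        ENNReal.ofReal_ofNat]
      ring

/-- Combining parallel-coupling chaos, entropy decay and equilibrium chaos estimates
yields exponential Wasserstein convergence of the nonlinear flow, letting `N → ∞`. -/
theorem nonlinear_W2_convergence {d : ℕ}
    (mt : ℝ → Measure (EuclideanSpace ℝ (Fin (2 * d))))
    (minf : Measure (EuclideanSpace ℝ (Fin (2 * d))))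
    (mN : (N : ℕ) → ℝ → Measure (Fin N → EuclideanSpace ℝ (Fin (2 * d))))
    (mNinf : (N : ℕ) → Measure (Fin N → EuclideanSpace ℝ (Fin (2 * d))))
    (hmt : ∀ t, IsProbabilityMeasure (mt t)) (hminf : IsProbabilityMeasure minf)
    (hmN : ∀ N t, IsProbabilityMeasure (mN N t)) (hmNinf : ∀ N, IsProbabilityMeasure (mNinf N))
    (K b χ : ℝ) (hK : 0 < K) (hb : 0 < b) (hχ : 0 < χ)
    (h1 : ∀ N : ℕ, 1 ≤ N → ∀ t : ℝ, 0 ≤ t →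
      W2sqPi (Measure.pi fun _ : Fin N => mt t) (mN N t) ≤ ENNReal.ofReal (K * Real.exp (2 * b * t)))
    (h2 : ∀ N : ℕ, 1 ≤ N → ∀ t : ℝ, 0 ≤ t →
      W2sqPi (mN N t) (mNinf N) ≤ ENNReal.ofReal (K * N * Real.exp (-χ * t)))
    (h3 : ∀ N : ℕ, 1 ≤ N → W2sqPi (mNinf N) (Measure.pi fun _ : Fin N => minf) ≤ ENNReal.ofReal K)
    (htens : ∀ N : ℕ, 1 ≤ N → ∀ t : ℝ, 0 ≤ t →
      W2sqPi (Measure.pi fun _ : Fin N => mt t) (Measure.pi fun _ : Fin N => minf)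
        = (N : ℝ≥0∞) * W2sq (mt t) minf) :
    ∃ K' : ℝ, 0 < K' ∧ ∀ t : ℝ, 0 ≤ t →
      W2sq (mt t) minf ≤ ENNReal.ofReal (K' * Real.exp (-χ * t)) :=
  nonlinear_W2_convergence_general mt minf mN mNinf hmN hmNinf K b χ hK h1 h2 h3 htens
end
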